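/- Let X be a complex Banach space, A a positive operator on X, ω > 0, θ > 0, and γ real with 1 − θ < γ < 1. Set β = 1 + (γ−1)/θ, so β ∈ (0,1). Then the Bochner integral ∫₀^∞ s^{-γ} (ω s^{θ} + A)^{-1} ds converges in L(X) and equals (1/θ) · ω^{-(1−γ)/θ} · (π / sin(πβ)) · A^{-β}, where A^{-β} = (sin(πβ)/π) ∫₀^∞ u^{-β}(u+A)^{-1} du. -/

import Mathlib

/-!
The substitution `u = s ^ θ` turns the integral into `θ⁻¹ ∫₀^∞ u^{-β} (ω u + A)⁻¹ du`, and the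
scaling `u ↦ u / ω` turns that into `θ⁻¹ ω^{β-1}` times the Balakrishnan integral of `A^{-β}`.
Convergence comes from `‖(s + A)⁻¹‖ ≤ M / (1 + s)`: the integrand is `O(s^{-γ})` at `0` and
`O(s^{-γ-θ})` at `∞`, and the resolvent identity makes `s ↦ (s + A)⁻¹` Lipschitz, hence measurable.
-/

open MeasureTheory Real Set

noncomputable section

/-- `R` is a two-sided bounded inverse of `lam + A : D(A) → X`;
in particular `lam + A` is bijective from `D(A)` onto `X` with bounded inverse `R`. -/
def ResolventAt {X : Type*} [NormedAddCommGroup X] [NormedSpace ℂ X]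
    (A : X →ₗ.[ℂ] X) (lam : ℂ) (R : X →L[ℂ] X) : Prop :=
  (∀ x : A.domain, R (lam • (x : X) + A x) = x) ∧
  (∀ y : X, ∃ h : R y ∈ A.domain, lam • R y + A ⟨R y, h⟩ = y)

/-- `A` is a positive operator with constant `M ≥ 1` and resolvent family `R`. -/
structure IsPositive {X : Type*} [NormedAddCommGroup X] [NormedSpace ℂ X]
    (A : X →ₗ.[ℂ] X) (M : ℝ) (R : ℝ → X →L[ℂ] X) : Prop where
  dense_domain : Dense (A.domain : Set X)
  closed_graph : IsClosed (A.graph : Set (X × X))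
  one_le : 1 ≤ M
  resolvent : ∀ s : ℝ, 0 ≤ s → ResolventAt A (s : ℂ) (R s)
  bound : ∀ s : ℝ, 0 ≤ s → (1 + s) * ‖R s‖ ≤ M

/-- The Balakrishnan fractional power `A ^ (-α)`, expressed through the
resolvent family `R` of `A`:  `A⁻ᵅ = (sin (π α) / π) ∫₀^∞ s⁻ᵅ (s+A)⁻¹ ds`. -/
def negPow {X : Type*} [NormedAddCommGroup X] [NormedSpace ℂ X]
    (R : ℝ → X →L[ℂ] X) (α : ℝ) : X →L[ℂ] X :=
  (Real.sin (π * α) / π) • ∫ s in Ioi (0 : ℝ), s ^ (-α) • R s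

namespace IsPositive

variable {X : Type*} [NormedAddCommGroup X] [NormedSpace ℂ X]
  {A : X →ₗ.[ℂ] X} {M : ℝ} {R : ℝ → X →L[ℂ] X}

lemma norm_le_div (hA : IsPositive A M R) {s : ℝ} (hs : 0 ≤ s) : ‖R s‖ ≤ M / (1 + s) := by
  rw [le_div_iff₀ (by linarith), mul_comm]
  exact hA.bound s hs

lemma norm_le (hA : IsPositive A M R) {s : ℝ} (hs : 0 ≤ s) : ‖R s‖ ≤ M :=
  (hA.norm_le_div hs).trans <| div_le_self (by linarith [hA.one_le]) (by linarith)

lemma norm_le_div_self (hA : IsPositive A M R) {s : ℝ} (hs : 0 < s) : ‖R s‖ ≤ M / s :=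
  (hA.norm_le_div hs.le).trans <| div_le_div_of_nonneg_left (by linarith [hA.one_le]) hs (by linarith)

lemma resolvent_identity (hA : IsPositive A M R) {s t : ℝ} (hs : 0 ≤ s) (ht : 0 ≤ t) (y : X) :
    R s y - R t y = ((t : ℂ) - s) • R t (R s y) := by
  obtain ⟨hmem, hy⟩ := (hA.resolvent s hs).2 y
  have h := (hA.resolvent t ht).1 ⟨R s y, hmem⟩
  have hAy : (A ⟨R s y, hmem⟩ : X) = y - (s : ℂ) • R s y := eq_sub_of_add_eq' hy
  rw [hAy, show (t : ℂ) • R s y + (y - (s : ℂ) • R s y) = ((t : ℂ) - s) • R s y + y by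
    rw [sub_smul]; abel, map_add, map_smul] at h
  rw [sub_eq_iff_eq_add, h]

lemma lipschitzOnWith (hA : IsPositive A M R) :
    LipschitzOnWith (M * M).toNNReal R (Ici 0) := by
  refine LipschitzOnWith.of_dist_le' fun s hs t ht => ?_
  rw [dist_eq_norm, dist_eq_norm, Real.norm_eq_abs]
  have hM : 0 ≤ M := zero_le_one.trans hA.one_le
  refine ContinuousLinearMap.opNorm_le_bound _ (by positivity) fun y => ?_
  have hts : ‖(t : ℂ) - s‖ = |s - t| := by
    rw [← Complex.ofReal_sub, Complex.norm_real, Real.norm_eq_abs, abs_sub_comm]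
  calc ‖(R s - R t) y‖ = |s - t| * ‖R t (R s y)‖ := by
        rw [sub_apply, hA.resolvent_identity hs ht, norm_smul, hts]
    _ ≤ |s - t| * (M * (M * ‖y‖)) := by
        gcongr
        exact (R t).le_of_opNorm_le_of_le (hA.norm_le ht) ((R s).le_of_opNorm_le (hA.norm_le hs) y)
    _ = M * M * |s - t| * ‖y‖ := by ring

lemma continuousOn (hA : IsPositive A M R) : ContinuousOn R (Ici 0) :=
  hA.lipschitzOnWith.continuousOn

end IsPositive

lemma integrableOn_Ioi_of_norm_le_rpow {E : Type*} [NormedAddCommGroup E] {f : ℝ → E}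
    {a b C D : ℝ} (hf : ContinuousOn f (Ioi 0)) (ha : -1 < a) (hb : b < -1)
    (h_zero : ∀ s ∈ Ioc (0 : ℝ) 1, ‖f s‖ ≤ C * s ^ a)
    (h_top : ∀ s ∈ Ioi (1 : ℝ), ‖f s‖ ≤ D * s ^ b) : IntegrableOn f (Ioi 0) := by
  rw [← Ioc_union_Ioi_eq_Ioi zero_le_one]
  refine IntegrableOn.union ?_ ?_
  · have hg : IntegrableOn (fun s : ℝ => C * s ^ a) (Ioc 0 1) :=
      ((intervalIntegrable_iff_integrableOn_Ioc_of_le zero_le_one).1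
        (intervalIntegral.intervalIntegrable_rpow' ha)).const_mul C
    exact hg.mono' ((hf.mono Ioc_subset_Ioi_self).aestronglyMeasurable measurableSet_Ioc)
      ((ae_restrict_iff' measurableSet_Ioc).2 (.of_forall h_zero))
  · have hg : IntegrableOn (fun s : ℝ => D * s ^ b) (Ioi 1) :=
      ((integrableOn_Ioi_rpow_iff zero_lt_one).2 hb).const_mul D
    exact hg.mono' ((hf.mono (Ioi_subset_Ioi zero_le_one)).aestronglyMeasurable measurableSet_Ioi)
      ((ae_restrict_iff' measurableSet_Ioi).2 (.of_forall h_top))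

lemma IsPositive.integrableOn_rpow_smul_comp_mul_rpow {X : Type*} [NormedAddCommGroup X]
    [NormedSpace ℂ X] {A : X →ₗ.[ℂ] X} {M : ℝ} {R : ℝ → X →L[ℂ] X} (hA : IsPositive A M R)
    {ω θ γ : ℝ} (hω : 0 < ω) (hγ : 1 - θ < γ) (hγ' : γ < 1) :
    IntegrableOn (fun s : ℝ => s ^ (-γ) • R (ω * s ^ θ)) (Ioi 0) := by
  have hpow (p : ℝ) : ContinuousOn (fun s : ℝ => s ^ p) (Ioi 0) := fun s hs =>
    (continuousAt_rpow_const s p (Or.inl (ne_of_gt hs))).continuousWithinAt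
  have hcont : ContinuousOn (fun s : ℝ => s ^ (-γ) • R (ω * s ^ θ)) (Ioi 0) :=
    (hpow _).smul <| hA.continuousOn.comp (continuousOn_const.mul (hpow θ)) fun s hs =>
      mem_Ici.2 (mul_nonneg hω.le (rpow_nonneg (le_of_lt hs) θ))
  have hnorm {s : ℝ} (hs : 0 < s) : ‖s ^ (-γ) • R (ω * s ^ θ)‖ = s ^ (-γ) * ‖R (ω * s ^ θ)‖ := by
    rw [norm_smul, Real.norm_of_nonneg (rpow_nonneg hs.le _)]
  refine integrableOn_Ioi_of_norm_le_rpow hcont (a := -γ) (b := -γ + -θ) (C := M) (D := M / ω)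
    (by linarith) (by linarith) (fun s hs => ?_) (fun s hs => ?_)
  · rw [hnorm hs.1, mul_comm M]
    exact mul_le_mul_of_nonneg_left
      (hA.norm_le (mul_nonneg hω.le (rpow_nonneg hs.1.le θ))) (rpow_nonneg hs.1.le _)
  · have hs0 : 0 < s := zero_lt_one.trans hs
    calc ‖s ^ (-γ) • R (ω * s ^ θ)‖ ≤ s ^ (-γ) * (M / (ω * s ^ θ)) := by
          rw [hnorm hs0]
          gcongr
          exact hA.norm_le_div_self (by positivity)
      _ = M / ω * s ^ (-γ + -θ) := by
          rw [rpow_add hs0, rpow_neg hs0.le θ]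
          field_simp

section ChangeOfVariables

variable {E : Type*} [NormedAddCommGroup E] [NormedSpace ℝ E]

lemma integral_Ioi_rpow_smul_comp_rpow (g : ℝ → E) {θ : ℝ} (hθ : 0 < θ) (γ : ℝ) :
    ∫ s in Ioi 0, s ^ (-γ) • g (s ^ θ)
      = θ⁻¹ • ∫ u in Ioi 0, u ^ (-(1 + (γ - 1) / θ)) • g u := by
  rw [← integral_comp_rpow_Ioi_of_pos (g := fun u => u ^ (-(1 + (γ - 1) / θ)) • g u) hθ,
    ← integral_smul]
  refine setIntegral_congr_fun measurableSet_Ioi fun s hs => ?_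
  simp only [smul_smul]
  congr 1
  rw [← rpow_mul (le_of_lt hs), mul_assoc, ← rpow_add hs, ← mul_assoc, inv_mul_cancel₀ hθ.ne',
    one_mul]
  congr 1
  field_simp
  ring

lemma integral_Ioi_rpow_smul_comp_mul (g : ℝ → E) {ω : ℝ} (hω : 0 < ω) (β : ℝ) :
    ∫ u in Ioi 0, u ^ (-β) • g (ω * u) = ω ^ (β - 1) • ∫ u in Ioi 0, u ^ (-β) • g u := by
  have hscale : ∀ u ∈ Ioi (0 : ℝ), u ^ (-β) • g (ω * u) = ω ^ β • ((ω * u) ^ (-β) • g (ω * u)) := by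
    intro u hu
    rw [mul_rpow hω.le (le_of_lt hu), smul_smul, ← mul_assoc, ← rpow_add hω, add_neg_cancel,
      rpow_zero, one_mul]
  rw [setIntegral_congr_fun measurableSet_Ioi hscale, integral_smul,
    integral_comp_mul_left_Ioi (fun u => u ^ (-β) • g u) 0 hω, mul_zero, smul_smul,
    rpow_sub_one hω.ne']
  rfl

end ChangeOfVariables

lemma smul_negPow {X : Type*} [NormedAddCommGroup X] [NormedSpace ℂ X] (R : ℝ → X →L[ℂ] X)
    {α : ℝ} (hα : Real.sin (π * α) ≠ 0) :
    (π / Real.sin (π * α)) • negPow R α = ∫ s in Ioi 0, s ^ (-α) • R s := by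
  rw [negPow, smul_smul, div_mul_div_comm, mul_comm π, div_self (mul_ne_zero hα pi_ne_zero),
    one_smul]

theorem stmt15_general {X : Type*} [NormedAddCommGroup X] [NormedSpace ℂ X]
    (M : ℝ) (A : X →ₗ.[ℂ] X) (R : ℝ → X →L[ℂ] X) (hA : IsPositive A M R)
    (ω θ γ : ℝ) (hω : 0 < ω) (hθ : 0 < θ) (hγ : 1 - θ < γ) (hγ' : γ < 1) :
    (0 < 1 + (γ - 1) / θ ∧ 1 + (γ - 1) / θ < 1) ∧
    IntegrableOn (fun s : ℝ => s ^ (-γ) • R (ω * s ^ θ)) (Ioi 0) ∧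
    ∫ s in Ioi (0 : ℝ), s ^ (-γ) • R (ω * s ^ θ)
      = ((1 / θ) * ω ^ (-((1 - γ) / θ)) * (π / Real.sin (π * (1 + (γ - 1) / θ)))) •
          negPow R (1 + (γ - 1) / θ) := by
  set β := 1 + (γ - 1) / θ
  have hβ_mem : 0 < β ∧ β < 1 := by
    constructor
    · have : -1 < (γ - 1) / θ := by rw [lt_div_iff₀ hθ]; linarith
      linarith
    · have : (γ - 1) / θ < 0 := div_neg_of_neg_of_pos (by linarith) hθ
      linarith
  have hsin : Real.sin (π * β) ≠ 0 :=
    (sin_pos_of_pos_of_lt_pi (mul_pos pi_pos hβ_mem.1) (mul_lt_of_lt_one_right pi_pos hβ_mem.2)).ne'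
  refine ⟨hβ_mem, hA.integrableOn_rpow_smul_comp_mul_rpow hω hγ hγ', ?_⟩
  rw [integral_Ioi_rpow_smul_comp_rpow (fun u => R (ω * u)) hθ, integral_Ioi_rpow_smul_comp_mul _ hω,
    ← smul_negPow R hsin, smul_smul, smul_smul, show -((1 - γ) / θ) = β - 1 by ring]
  congr 1
  ring

/-- change of variables: for `ω, θ > 0` and `1 - θ < γ < 1`, with
`β = 1 + (γ-1)/θ ∈ (0,1)`,
`∫₀^∞ s⁻ᵞ (ω sᶿ + A)⁻¹ ds = (1/θ) ω^{-(1-γ)/θ} (π / sin (πβ)) A⁻ᵝ`. -/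
theorem stmt15 {X : Type*} [NormedAddCommGroup X] [NormedSpace ℂ X] [CompleteSpace X]
    (M : ℝ) (A : X →ₗ.[ℂ] X) (R : ℝ → X →L[ℂ] X) (hA : IsPositive A M R)
    (ω θ γ : ℝ) (hω : 0 < ω) (hθ : 0 < θ) (hγ : 1 - θ < γ) (hγ' : γ < 1) :
    (0 < 1 + (γ - 1) / θ ∧ 1 + (γ - 1) / θ < 1) ∧
    IntegrableOn (fun s : ℝ => s ^ (-γ) • R (ω * s ^ θ)) (Ioi 0) ∧
    ∫ s in Ioi (0 : ℝ), s ^ (-γ) • R (ω * s ^ θ)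
      = ((1 / θ) * ω ^ (-((1 - γ) / θ)) * (π / Real.sin (π * (1 + (γ - 1) / θ)))) •
          negPow R (1 + (γ - 1) / θ) :=
  stmt15_general M A R hA ω θ γ hω hθ hγ hγ'
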